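/- For each fixed f ∈ (0,1), the billiard rotation number tends to 1/2 as the inner eccentricity tends to 1: lim_{e→1⁻} ρ̂(e,f) = 1/2, where the limit is taken over e ∈ (f,1). -/

import Mathlib

open Real Filter

/-- Incomplete elliptic integral of the first kind `F(φ,e)`. -/
noncomputable def ellF (φ e : ℝ) : ℝ :=
  ∫ τ in (0:ℝ)..φ, 1 / Real.sqrt (1 - e ^ 2 * Real.sin τ ^ 2)

/-- Complete elliptic integral of the first kind `K(e)`. -/
noncomputable def ellK (e : ℝ) : ℝ := ellF (Real.pi / 2) e

/-- The angle `ω̂(e,f)`. -/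
noncomputable def omegaHat (e f : ℝ) : ℝ :=
  Real.arcsin (Real.sqrt ((e ^ 2 - f ^ 2) / (e ^ 2 * (1 - f ^ 2))))

/-- The billiard rotation number `ρ̂(e,f)`. -/
noncomputable def rhoHat (e f : ℝ) : ℝ := ellF (omegaHat e f) e / (2 * ellK e)

/-!
Write `ρ̂ = 1/2 - (K(e) - F(ω̂, e)) / (2 K(e))`. The tail `K - F(ω̂) = ∫_{ω̂}^{π/2}` stays bounded
as `e → 1`: its integrand is at most `1/√(1 - e²)`, while by Jordan's inequality the length of the
interval is `π/2 - ω̂ ≤ (π/2) cos ω̂ ≤ (π/2) √(1 - e²)/√(1 - f²)`. On the other hand `K(e)` blows up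
logarithmically: on `[0, π/2]` we have `1 - e² sin² τ ≤ (√(1 - e²) + π/2 - τ)²`, and integrating
the reciprocal of the right-hand root gives `K(e) ≥ log (1 + π / (2 √(1 - e²)))`.
-/

open Set Topology

lemma one_sub_sq_le_one_sub_sq_mul_sin_sq (e τ : ℝ) : 1 - e ^ 2 ≤ 1 - e ^ 2 * sin τ ^ 2 := by
  nlinarith [mul_le_mul_of_nonneg_left (sin_sq_le_one τ) (sq_nonneg e)]

lemma one_sub_sq_mul_sin_sq_pos {e : ℝ} (he : e ^ 2 < 1) (τ : ℝ) :
    0 < 1 - e ^ 2 * sin τ ^ 2 :=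
  (sub_pos.2 he).trans_le (one_sub_sq_le_one_sub_sq_mul_sin_sq e τ)

lemma continuous_ellF_integrand {e : ℝ} (he : e ^ 2 < 1) :
    Continuous fun τ => 1 / √(1 - e ^ 2 * sin τ ^ 2) :=
  continuous_const.div (by fun_prop) fun τ => (sqrt_pos.2 (one_sub_sq_mul_sin_sq_pos he τ)).ne'

lemma ellK_sub_ellF {e : ℝ} (he : e ^ 2 < 1) (φ : ℝ) :
    ellK e - ellF φ e = ∫ τ in φ..π / 2, 1 / √(1 - e ^ 2 * sin τ ^ 2) :=
  sub_eq_of_eq_add' (intervalIntegral.integral_add_adjacent_intervals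
    ((continuous_ellF_integrand he).intervalIntegrable _ _)
    ((continuous_ellF_integrand he).intervalIntegrable _ _)).symm

lemma pi_div_two_le_ellK {e : ℝ} (he : e ^ 2 < 1) : π / 2 ≤ ellK e := by
  have h := intervalIntegral.integral_mono_on (f := fun _ => (1 : ℝ)) (by positivity)
    (intervalIntegrable_const (μ := MeasureTheory.volume))
    ((continuous_ellF_integrand he).intervalIntegrable 0 (π / 2))
    fun τ _ => by
      rw [le_div_iff₀ (sqrt_pos.2 (one_sub_sq_mul_sin_sq_pos he τ)), one_mul, sqrt_le_one]
      nlinarith [sq_nonneg (e * sin τ)]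
  simpa [ellK, ellF] using h

lemma log_one_add_le_ellK {e : ℝ} (he : e ^ 2 < 1) :
    log (1 + π / 2 / √(1 - e ^ 2)) ≤ ellK e := by
  set δ := √(1 - e ^ 2)
  have hδ : 0 < δ := sqrt_pos.2 (by linarith)
  have hδsq : δ ^ 2 = 1 - e ^ 2 := sq_sqrt (by linarith)
  have hlog : ∫ τ in (0 : ℝ)..π / 2, 1 / (δ + π / 2 - τ) = log (1 + π / 2 / δ) := by
    have h := intervalIntegral.integral_comp_sub_left (fun x : ℝ => 1 / x) (a := 0) (b := π / 2)
      (δ + π / 2)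
    simp only [add_sub_cancel_right, sub_zero] at h
    rw [h, integral_one_div_of_pos hδ (by positivity)]
    congr 1
    field_simp
  rw [← hlog]
  refine intervalIntegral.integral_mono_on (by positivity) ?_
    ((continuous_ellF_integrand he).intervalIntegrable _ _) fun τ hτ => ?_
  · refine ContinuousOn.intervalIntegrable (continuousOn_const.div (by fun_prop) fun τ hτ => ?_)
    rw [uIcc_of_le (by positivity)] at hτ
    linarith [hτ.2]
  · have hcos : cos τ ^ 2 ≤ (π / 2 - τ) ^ 2 := by
      rw [← sin_pi_div_two_sub]
      exact sin_sq_le_sq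
    refine one_div_le_one_div_of_le (sqrt_pos.2 (one_sub_sq_mul_sin_sq_pos he τ))
      (sqrt_le_iff.2 ⟨by linarith [hτ.2], ?_⟩)
    nlinarith [sin_sq_add_cos_sq τ, sin_sq_le_one τ, mul_nonneg hδ.le (sub_nonneg.2 hτ.2)]

lemma tendsto_ellK_atTop : Tendsto ellK (𝓝[<] 1) atTop := by
  have hΔ : ∀ᶠ e in 𝓝[<] (1 : ℝ), e ^ 2 < 1 := by
    filter_upwards [Ioo_mem_nhdsLT (show (-1 : ℝ) < 1 by norm_num)] with e he
    nlinarith [he.1, he.2]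
  have hδ : Tendsto (fun e : ℝ => √(1 - e ^ 2)) (𝓝[<] 1) (𝓝[>] 0) := by
    refine tendsto_nhdsWithin_iff.2 ⟨?_, hΔ.mono fun e he => sqrt_pos.2 (by linarith)⟩
    have h : Continuous fun e : ℝ => √(1 - e ^ 2) := by fun_prop
    simpa using h.continuousWithinAt.tendsto (x := 1) (s := Iio 1)
  have hlog : Tendsto (fun e : ℝ => log (1 + π / 2 / √(1 - e ^ 2))) (𝓝[<] 1) atTop := by
    refine tendsto_log_atTop.comp (tendsto_atTop_add_const_left _ 1 ?_)
    simpa only [div_eq_mul_inv, Function.comp_def] using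
      (tendsto_inv_nhdsGT_zero.comp hδ).const_mul_atTop (by positivity : 0 < π / 2)
  exact tendsto_atTop_mono' _ (hΔ.mono fun e he => log_one_add_le_ellK he) hlog

lemma cos_omegaHat_le {e f : ℝ} (hfe : |f| < e) (he : e < 1) :
    cos (omegaHat e f) ≤ √(1 - e ^ 2) / √(1 - f ^ 2) := by
  have he0 : 0 < e := (abs_nonneg f).trans_lt hfe
  have hfe2 : f ^ 2 < e ^ 2 := sq_lt_sq' (by linarith [neg_abs_le f]) (by linarith [le_abs_self f])
  have hf1 : 0 < 1 - f ^ 2 := by nlinarith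
  have he1 : 0 ≤ 1 - e ^ 2 := by nlinarith
  have hratio : 1 - (e ^ 2 - f ^ 2) / (e ^ 2 * (1 - f ^ 2)) =
      f ^ 2 / e ^ 2 * ((1 - e ^ 2) / (1 - f ^ 2)) := by
    field_simp
    ring
  rw [omegaHat, cos_arcsin, sq_sqrt (div_nonneg (by linarith) (by positivity)), hratio,
    ← sqrt_div he1]
  refine sqrt_le_sqrt (mul_le_of_le_one_left (by positivity) ?_)
  exact div_le_one_of_le₀ hfe2.le (sq_nonneg e)

lemma ellK_sub_ellF_omegaHat_le {e f : ℝ} (hfe : |f| < e) (he : e < 1) :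
    ellK e - ellF (omegaHat e f) e ≤ π / 2 / √(1 - f ^ 2) := by
  set ω := omegaHat e f
  have hω0 : 0 ≤ ω := arcsin_nonneg.2 (sqrt_nonneg _)
  have he0 : 0 < e := (abs_nonneg f).trans_lt hfe
  have he2 : e ^ 2 < 1 := by nlinarith
  have hδ : 0 < √(1 - e ^ 2) := sqrt_pos.2 (by linarith)
  have hωπ : ω ≤ π / 2 := arcsin_le_pi_div_two _
  have hjordan : π / 2 - ω ≤ π / 2 * cos ω := by
    have h := mul_le_sin (x := π / 2 - ω) (by linarith) (by linarith)
    rw [sin_pi_div_two_sub] at h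
    calc π / 2 - ω = π / 2 * (2 / π * (π / 2 - ω)) := by field_simp
      _ ≤ π / 2 * cos ω := by gcongr
  calc ellK e - ellF ω e = ∫ τ in ω..π / 2, 1 / √(1 - e ^ 2 * sin τ ^ 2) := ellK_sub_ellF he2 ω
    _ ≤ ∫ _ in ω..π / 2, 1 / √(1 - e ^ 2) :=
        intervalIntegral.integral_mono_on hωπ
          ((continuous_ellF_integrand he2).intervalIntegrable _ _) intervalIntegrable_const
          fun τ _ => one_div_le_one_div_of_le hδ
            (sqrt_le_sqrt (one_sub_sq_le_one_sub_sq_mul_sin_sq e τ))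
    _ = (π / 2 - ω) / √(1 - e ^ 2) := by simp [div_eq_mul_inv]
    _ ≤ π / 2 * (√(1 - e ^ 2) / √(1 - f ^ 2)) / √(1 - e ^ 2) := by
        gcongr
        exact hjordan.trans (by gcongr; exact cos_omegaHat_le hfe he)
    _ = π / 2 / √(1 - f ^ 2) := by field_simp

lemma ellK_pos {e : ℝ} (he : e ^ 2 < 1) : 0 < ellK e :=
  (div_pos pi_pos two_pos).trans_le (pi_div_two_le_ellK he)

lemma half_sub_rhoHat {e : ℝ} (he : e ^ 2 < 1) (f : ℝ) :
    1 / 2 - rhoHat e f = (ellK e - ellF (omegaHat e f) e) / (2 * ellK e) := by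
  have hK := ellK_pos he
  rw [rhoHat]
  field_simp

lemma rhoHat_le_half {e : ℝ} (he : e ^ 2 < 1) (f : ℝ) : rhoHat e f ≤ 1 / 2 := by
  have hK := ellK_pos he
  have hF : 0 ≤ ellK e - ellF (omegaHat e f) e := by
    rw [ellK_sub_ellF he]
    exact intervalIntegral.integral_nonneg (arcsin_le_pi_div_two _) fun τ _ => by positivity
  rw [← sub_nonneg, half_sub_rhoHat he]
  positivity

lemma half_sub_rhoHat_le {e f : ℝ} (hfe : |f| < e) (he : e < 1) :
    1 / 2 - rhoHat e f ≤ π / 2 / √(1 - f ^ 2) / (2 * ellK e) := by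
  have he2 : e ^ 2 < 1 := by nlinarith [(abs_nonneg f).trans_lt hfe]
  rw [half_sub_rhoHat he2]
  have hK := ellK_pos he2
  gcongr
  exact ellK_sub_ellF_omegaHat_le hfe he

theorem rhoHat_limit_half_general (f : ℝ) (hf0 : 0 < f) :
    Tendsto (fun e => rhoHat e f) (nhdsWithin 1 (Set.Ioo f 1)) (nhds (1 / 2)) := by
  have hK : Tendsto ellK (𝓝[Ioo f 1] 1) atTop :=
    tendsto_ellK_atTop.mono_left (nhdsWithin_mono _ Ioo_subset_Iio_self)
  have hΔ : ∀ᶠ e in 𝓝[Ioo f 1] 1, |f| < e ∧ e < 1 := by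
    filter_upwards [self_mem_nhdsWithin] with e he
    exact ⟨(abs_of_pos hf0).trans_lt he.1, he.2⟩
  have hgap : Tendsto (fun e => 1 / 2 - rhoHat e f) (𝓝[Ioo f 1] 1) (𝓝 0) :=
    squeeze_zero'
      (hΔ.mono fun e he => sub_nonneg.2 (rhoHat_le_half (by nlinarith [abs_nonneg f]) f))
      (hΔ.mono fun e he => half_sub_rhoHat_le he.1 he.2)
      (tendsto_const_nhds.div_atTop (hK.const_mul_atTop two_pos))
  simpa using (tendsto_const_nhds (x := (1 / 2 : ℝ))).sub hgap

/-- for fixed `f ∈ (0,1)`, the billiard rotation number tends to `1/2`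
as `e → 1⁻` over `e ∈ (f, 1)`. -/
theorem rhoHat_limit_half (f : ℝ) (hf0 : 0 < f) (hf1 : f < 1) :
    Tendsto (fun e => rhoHat e f) (nhdsWithin 1 (Set.Ioo f 1)) (nhds (1 / 2)) :=
  rhoHat_limit_half_general f hf0
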